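/- For a symmetric block matrix A = [[A1, 0],[0, A2]] and a symmetric perturbation E = [[0, E1^T],[E1, 0]], if λ_i(A) is an eigenvalue of A1 whose distance to the spectrum of A2 is gap_i > 0, then |λ_i(A) - λ_i(A+E)| ≤ ‖E‖² / gap_i, where eigenvalues are ordered decreasingly and ‖·‖ is the operator norm. -/

import Mathlib

/-!
For a symmetric `S`, the number of eigenvalues of `S` above (below) `c` is the positive (negative)
index of inertia of the form `x ↦ xᵀ S x - c ‖x‖²` (Sylvester's law of inertia). Indices of
inertia are monotone in the form and additive over orthogonal sums, so the coupling estimate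
`|2 vᵀ E1 u| ≤ (‖E‖² / gap) ‖u‖² + gap ‖v‖²` (AM-GM together with `‖E1 u‖ ≤ ‖E‖ ‖u‖`) bounds the
number of eigenvalues of `A + E` above `c` by those of `A1` above `c - ‖E‖² / gap` plus those of
`A2` above `c - gap`, and symmetrically below `c`. No eigenvalue of `A2` lies within `gap` of
`μ i`, so at `c = μ i ± ‖E‖² / gap` the shift by `gap` in the `A2` block changes nothing, and
comparing with the counts for `A = diag(A1, A2)` traps `ν i` within `‖E‖² / gap` of `μ i`.
-/

open scoped Matrix.Norms.L2Operator

open Finset Matrix QuadraticMap QuadraticForm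

namespace QuadraticForm

theorem sigPos_mono {K M : Type*} [Field K] [LinearOrder K] [AddCommGroup M] [Module K M]
    [FiniteDimensional K M] {Q Q' : QuadraticForm K M} (h : ∀ x, Q x ≤ Q' x) :
    sigPos Q ≤ sigPos Q' := by
  obtain ⟨V, hV, hQV⟩ := exists_finrank_eq_sigPos_and_posDef Q
  exact hV ▸ le_sigPos_of_posDef Q' fun x hx => (hQV x hx).trans_le (h x)

variable {K M M₁ M₂ : Type*} [Field K] [LinearOrder K] [IsStrictOrderedRing K]
  [AddCommGroup M] [Module K M] [AddCommGroup M₁] [Module K M₁] [FiniteDimensional K M₁]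
  [AddCommGroup M₂] [Module K M₂] [FiniteDimensional K M₂]

theorem sigPos_weightedSumSquares_sumElim {ι κ : Type*} [Fintype ι] [Fintype κ] (w₁ : ι → K)
    (w₂ : κ → K) :
    sigPos (weightedSumSquares K (Sum.elim w₁ w₂)) =
      sigPos (weightedSumSquares K w₁) + sigPos (weightedSumSquares K w₂) := by
  have hpos :
      {i | 0 < Sum.elim w₁ w₂ i} = Sum.inl '' {i | 0 < w₁ i} ∪ Sum.inr '' {i | 0 < w₂ i} := by
    ext (i | i) <;> simp
  rw [sigPos_weightedSumSquares, sigPos_weightedSumSquares, sigPos_weightedSumSquares, hpos,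
    Set.ncard_union_eq Set.disjoint_image_inl_image_inr (Set.toFinite _) (Set.toFinite _),
    Set.ncard_image_of_injective _ Sum.inl_injective,
    Set.ncard_image_of_injective _ Sum.inr_injective]

theorem sigPos_prod (Q₁ : QuadraticForm K M₁) (Q₂ : QuadraticForm K M₂) :
    sigPos (Q₁.prod Q₂) = sigPos Q₁ + sigPos Q₂ := by
  have : Invertible (2 : K) := invertibleOfNonzero two_ne_zero
  obtain ⟨w₁, ⟨e₁⟩⟩ := Q₁.equivalent_weightedSumSquares
  obtain ⟨w₂, ⟨e₂⟩⟩ := Q₂.equivalent_weightedSumSquares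
  let e : ((weightedSumSquares K w₁).prod (weightedSumSquares K w₂)).IsometryEquiv
      (weightedSumSquares K (Sum.elim w₁ w₂)) :=
    { (LinearEquiv.sumArrowLequivProdArrow _ _ K K).symm with
      map_app' := fun x => by simp [weightedSumSquares_apply, Fintype.sum_sum_type]; rfl }
  rw [Equivalent.sigPos_eq ⟨e₁.prod e₂⟩, Equivalent.sigPos_eq ⟨e⟩,
    sigPos_weightedSumSquares_sumElim, ← Equivalent.sigPos_eq ⟨e₁⟩, ← Equivalent.sigPos_eq ⟨e₂⟩]

theorem sigPos_le_add_of_le_prod {Q : QuadraticForm K M} {Q₁ : QuadraticForm K M₁}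
    {Q₂ : QuadraticForm K M₂} (e : (M₁ × M₂) ≃ₗ[K] M)
    (h : ∀ x₁ x₂, Q (e (x₁, x₂)) ≤ Q₁ x₁ + Q₂ x₂) : sigPos Q ≤ sigPos Q₁ + sigPos Q₂ := by
  rw [Equivalent.sigPos_eq ⟨Q.isometryEquivOfCompLinearEquiv e⟩, ← sigPos_prod]
  exact sigPos_mono fun x => h x.1 x.2

theorem sigNeg_le_add_of_prod_le {Q : QuadraticForm K M} {Q₁ : QuadraticForm K M₁}
    {Q₂ : QuadraticForm K M₂} (e : (M₁ × M₂) ≃ₗ[K] M)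
    (h : ∀ x₁ x₂, Q₁ x₁ + Q₂ x₂ ≤ Q (e (x₁, x₂))) : sigNeg Q ≤ sigNeg Q₁ + sigNeg Q₂ := by
  have := sigPos_le_add_of_le_prod (Q := -Q) (Q₁ := -Q₁) (Q₂ := -Q₂) e fun x₁ x₂ => by
    simp only [_root_.neg_apply]
    linarith [h x₁ x₂]
  simpa only [sigPos_neg] using this

end QuadraticForm

theorem EuclideanSpace.norm_equiv_symm_sq {ι : Type*} [Fintype ι] (x : ι → ℝ) :
    ‖(EuclideanSpace.equiv ι ℝ).symm x‖ ^ 2 = x ⬝ᵥ x := by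
  rw [EuclideanSpace.real_norm_sq_eq]
  simp [dotProduct, pow_two]

theorem abs_two_mul_dotProduct_le {ι : Type*} [Fintype ι] (v w : ι → ℝ) {g : ℝ} (hg : 0 < g) :
    |2 * (v ⬝ᵥ w)| ≤ (w ⬝ᵥ w) / g + g * (v ⬝ᵥ v) := by
  have h₁ : 0 ≤ (w - g • v) ⬝ᵥ (w - g • v) := Finset.sum_nonneg fun j _ => mul_self_nonneg _
  have h₂ : 0 ≤ (w + g • v) ⬝ᵥ (w + g • v) := Finset.sum_nonneg fun j _ => mul_self_nonneg _
  simp only [sub_dotProduct, dotProduct_sub, add_dotProduct, dotProduct_add, smul_dotProduct,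
    dotProduct_smul, smul_eq_mul, dotProduct_comm w v] at h₁ h₂
  rw [div_add' _ _ _ hg.ne', le_div_iff₀ hg]
  rcases abs_cases (2 * (v ⬝ᵥ w)) with ⟨h, -⟩ | ⟨h, -⟩ <;> rw [h] <;> nlinarith

theorem card_filter_eq_countP_map {α β : Type*} [Fintype α] (f : α → β) (p : β → Prop)
    [DecidablePred p] : #{a | p (f a)} = (univ.val.map f).countP p :=
  (Multiset.countP_map _ _ _).symm

theorem card_filter_eq_of_coe_ofFn_eq {k : ℕ} {α β : Type*} [Fintype α] {f : Fin k → β}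
    {g : α → β} (e : Fin k ≃ α) (h : (List.ofFn f : Multiset β) = List.ofFn fun i => g (e i))
    (p : β → Prop) [DecidablePred p] : #{j | p (f j)} = #{a | p (g a)} := by
  rw [card_filter_eq_countP_map, Fin.univ_val_map, h, ← Fin.univ_val_map,
    ← card_filter_eq_countP_map]
  exact card_equiv e (by simp)

theorem Antitone.lt_card_filter_lt_iff {α : Type*} [LinearOrder α] {k : ℕ} {w : Fin k → α}
    (hw : Antitone w) (i : Fin k) (c : α) : (i : ℕ) < #{j | c < w j} ↔ c < w i := by
  refine ⟨fun h => ?_, fun hi => ?_⟩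
  · by_contra! hi
    have hsub : ({j | c < w j} : Finset (Fin k)) ⊆ Iio i := fun j hj => by
      simp only [mem_filter, mem_univ, true_and] at hj
      exact mem_Iio.2 (lt_of_not_ge fun hij => (hj.trans_le (hw hij)).not_ge hi)
    have := card_le_card hsub
    rw [Fin.card_Iio] at this
    omega
  · have hsub : Iic i ⊆ ({j | c < w j} : Finset (Fin k)) := fun j hj => by
      simpa using hi.trans_le (hw (mem_Iic.1 hj))
    have := card_le_card hsub
    rw [Fin.card_Iic] at this
    omega

theorem Antitone.le_card_filter_lt_add_iff {α : Type*} [LinearOrder α] {k : ℕ} {w : Fin k → α}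
    (hw : Antitone w) (i : Fin k) (c : α) : k ≤ #{j | w j < c} + i ↔ w i < c := by
  refine ⟨fun h => ?_, fun hi => ?_⟩
  · by_contra! hi
    have hsub : ({j | w j < c} : Finset (Fin k)) ⊆ Ioi i := fun j hj => by
      simp only [mem_filter, mem_univ, true_and] at hj
      exact mem_Ioi.2 (lt_of_not_ge fun hji => ((hw hji).trans_lt hj).not_ge hi)
    have := card_le_card hsub
    rw [Fin.card_Ioi] at this
    omega
  · have hsub : Ici i ⊆ ({j | w j < c} : Finset (Fin k)) := fun j hj => by
      simpa using (hw (mem_Ici.1 hj)).trans_lt hi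
    have := card_le_card hsub
    rw [Fin.card_Ici] at this
    omega

namespace Matrix

variable {ι κ : Type*} [Fintype ι] [Fintype κ]

theorem mulVec_dotProduct_mulVec_mulVec {R : Type*} [CommRing R] (U S : Matrix ι ι R)
    (y : ι → R) : (U *ᵥ y) ⬝ᵥ (S *ᵥ (U *ᵥ y)) = y ⬝ᵥ ((Uᵀ * S * U) *ᵥ y) := by
  rw [mulVec_mulVec, ← vecMul_transpose, ← dotProduct_mulVec, mulVec_mulVec, Matrix.mul_assoc]

theorem sumElim_dotProduct_fromBlocks_transpose_mulVec_sumElim {R : Type*} [CommRing R]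
    (B₁ : Matrix ι ι R) (C : Matrix κ ι R) (B₂ : Matrix κ κ R) (u : ι → R) (v : κ → R) :
    Sum.elim u v ⬝ᵥ (fromBlocks B₁ Cᵀ C B₂ *ᵥ Sum.elim u v) =
      u ⬝ᵥ (B₁ *ᵥ u) + v ⬝ᵥ (B₂ *ᵥ v) + 2 * (v ⬝ᵥ (C *ᵥ u)) := by
  rw [fromBlocks_mulVec, sumElim_dotProduct_sumElim, Sum.elim_comp_inl, Sum.elim_comp_inr,
    dotProduct_add, dotProduct_add, mulVec_transpose, dotProduct_comm u (v ᵥ* C),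
    ← dotProduct_mulVec]
  ring

theorem mulVec_dotProduct_mulVec_self_le [DecidableEq ι] (M : Matrix κ ι ℝ)
    (x : ι → ℝ) : (M *ᵥ x) ⬝ᵥ (M *ᵥ x) ≤ ‖M‖ ^ 2 * (x ⬝ᵥ x) := by
  have := pow_le_pow_left₀ (norm_nonneg _)
    (M.l2_opNorm_mulVec ((EuclideanSpace.equiv ι ℝ).symm x)) 2
  rw [mul_pow, EuclideanSpace.norm_equiv_symm_sq, EuclideanSpace.norm_equiv_symm_sq] at this
  simpa using this

variable [DecidableEq ι] [DecidableEq κ]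

theorem mulVec_dotProduct_mulVec_self_le_fromBlocks₂₁ (B₁₁ : Matrix ι ι ℝ) (B₁₂ : Matrix ι κ ℝ)
    (B₂₁ : Matrix κ ι ℝ) (B₂₂ : Matrix κ κ ℝ) (u : ι → ℝ) :
    (B₂₁ *ᵥ u) ⬝ᵥ (B₂₁ *ᵥ u) ≤ ‖fromBlocks B₁₁ B₁₂ B₂₁ B₂₂‖ ^ 2 * (u ⬝ᵥ u) := by
  have := mulVec_dotProduct_mulVec_self_le (fromBlocks B₁₁ B₁₂ B₂₁ B₂₂) (Sum.elim u 0)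
  rw [fromBlocks_mulVec, sumElim_dotProduct_sumElim, sumElim_dotProduct_sumElim] at this
  simp only [Sum.elim_comp_inl, Sum.elim_comp_inr, mulVec_zero, add_zero, dotProduct_zero] at this
  have hnonneg : 0 ≤ (B₁₁ *ᵥ u) ⬝ᵥ (B₁₁ *ᵥ u) := Finset.sum_nonneg fun j _ => mul_self_nonneg _
  linarith

theorem abs_two_mul_dotProduct_mulVec_le_fromBlocks (B₁₁ : Matrix ι ι ℝ) (B₁₂ : Matrix ι κ ℝ)
    (B₂₁ : Matrix κ ι ℝ) (B₂₂ : Matrix κ κ ℝ) (u : ι → ℝ) (v : κ → ℝ) {g : ℝ} (hg : 0 < g) :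
    |2 * (v ⬝ᵥ (B₂₁ *ᵥ u))| ≤
      ‖fromBlocks B₁₁ B₁₂ B₂₁ B₂₂‖ ^ 2 / g * (u ⬝ᵥ u) + g * (v ⬝ᵥ v) := by
  refine (abs_two_mul_dotProduct_le v (B₂₁ *ᵥ u) hg).trans ?_
  rw [div_mul_eq_mul_div]
  gcongr
  exact mulVec_dotProduct_mulVec_self_le_fromBlocks₂₁ B₁₁ B₁₂ B₂₁ B₂₂ u

theorem toQuadraticForm'_sub_smul_one_apply {R : Type*} [CommRing R] (S : Matrix ι ι R) (c : R)
    (x : ι → R) : (S - c • 1).toQuadraticForm' x = x ⬝ᵥ (S *ᵥ x) - c * (x ⬝ᵥ x) := by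
  simp [toQuadraticForm', toLinearMap₂'_apply']

namespace IsHermitian

variable {S : Matrix ι ι ℝ}

theorem equivalent_weightedSumSquares_sub (hS : S.IsHermitian) (c : ℝ) :
    (weightedSumSquares ℝ fun j => hS.eigenvalues j - c).Equivalent
      (S - c • 1).toQuadraticForm' := by
  set U := hS.eigenvectorUnitary
  have hUt : (U : Matrix ι ι ℝ)ᵀ = star (U : Matrix ι ι ℝ) := by
    rw [star_eq_conjTranspose, conjTranspose_eq_transpose_of_trivial]
  have hdiag : (U : Matrix ι ι ℝ)ᵀ * S * U = diagonal hS.eigenvalues := by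
    simpa [Unitary.conjStarAlgAut_apply, hUt] using hS.conjStarAlgAut_star_eigenvectorUnitary
  have hnorm (y : ι → ℝ) : ((U : Matrix ι ι ℝ) *ᵥ y) ⬝ᵥ ((U : Matrix ι ι ℝ) *ᵥ y) = y ⬝ᵥ y := by
    simpa [hUt] using mulVec_dotProduct_mulVec_mulVec (U : Matrix ι ι ℝ) 1 y
  refine ⟨⟨UnitaryGroup.toLinearEquiv U, fun y => ?_⟩⟩
  change (S - c • 1).toQuadraticForm' (U *ᵥ y) = _
  rw [toQuadraticForm'_sub_smul_one_apply, mulVec_dotProduct_mulVec_mulVec, hdiag, hnorm,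
    weightedSumSquares_apply, dotProduct, dotProduct, Finset.mul_sum, ← Finset.sum_sub_distrib]
  refine Finset.sum_congr rfl fun j _ => ?_
  simp [mulVec_diagonal]
  ring

theorem sigPos_toQuadraticForm'_sub (hS : S.IsHermitian) (c : ℝ) :
    sigPos (S - c • 1).toQuadraticForm' = #{j | c < hS.eigenvalues j} := by
  rw [← (hS.equivalent_weightedSumSquares_sub c).sigPos_eq, sigPos_weightedSumSquares]
  simp [Set.ncard_eq_toFinset_card']

theorem sigNeg_toQuadraticForm'_sub (hS : S.IsHermitian) (c : ℝ) :
    sigNeg (S - c • 1).toQuadraticForm' = #{j | hS.eigenvalues j < c} := by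
  rw [← (hS.equivalent_weightedSumSquares_sub c).sigNeg_eq, sigNeg_weightedSumSquares]
  simp [Set.ncard_eq_toFinset_card']

variable {S : Matrix (ι ⊕ κ) (ι ⊕ κ) ℝ} {B₁ : Matrix ι ι ℝ} {B₂ : Matrix κ κ ℝ}

theorem card_lt_eigenvalues_le_add (hS : S.IsHermitian) (hB₁ : B₁.IsHermitian)
    (hB₂ : B₂.IsHermitian) {a b : ℝ}
    (h : ∀ u v, Sum.elim u v ⬝ᵥ (S *ᵥ Sum.elim u v) ≤
      u ⬝ᵥ (B₁ *ᵥ u) + v ⬝ᵥ (B₂ *ᵥ v) + a * (u ⬝ᵥ u) + b * (v ⬝ᵥ v)) (c : ℝ) :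
    #{j | c < hS.eigenvalues j} ≤
      #{j | c - a < hB₁.eigenvalues j} + #{j | c - b < hB₂.eigenvalues j} := by
  rw [← hS.sigPos_toQuadraticForm'_sub, ← hB₁.sigPos_toQuadraticForm'_sub,
    ← hB₂.sigPos_toQuadraticForm'_sub]
  refine sigPos_le_add_of_le_prod (LinearEquiv.sumArrowLequivProdArrow ι κ ℝ ℝ).symm
    fun u v => ?_
  change (S - c • 1).toQuadraticForm' (Sum.elim u v) ≤ _
  simp only [toQuadraticForm'_sub_smul_one_apply, sumElim_dotProduct_sumElim]
  linarith [h u v]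

theorem card_eigenvalues_lt_le_add (hS : S.IsHermitian) (hB₁ : B₁.IsHermitian)
    (hB₂ : B₂.IsHermitian) {a b : ℝ}
    (h : ∀ u v, u ⬝ᵥ (B₁ *ᵥ u) + v ⬝ᵥ (B₂ *ᵥ v) - a * (u ⬝ᵥ u) - b * (v ⬝ᵥ v) ≤
      Sum.elim u v ⬝ᵥ (S *ᵥ Sum.elim u v)) (c : ℝ) :
    #{j | hS.eigenvalues j < c} ≤
      #{j | hB₁.eigenvalues j < c + a} + #{j | hB₂.eigenvalues j < c + b} := by
  rw [← hS.sigNeg_toQuadraticForm'_sub, ← hB₁.sigNeg_toQuadraticForm'_sub,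
    ← hB₂.sigNeg_toQuadraticForm'_sub]
  refine sigNeg_le_add_of_prod_le (LinearEquiv.sumArrowLequivProdArrow ι κ ℝ ℝ).symm
    fun u v => ?_
  change _ ≤ (S - c • 1).toQuadraticForm' (Sum.elim u v)
  simp only [toQuadraticForm'_sub_smul_one_apply, sumElim_dotProduct_sumElim]
  linarith [h u v]

theorem card_filter_eigenvalues_fromBlocks (hB : (Matrix.fromBlocks B₁ 0 0 B₂).IsHermitian)
    (hB₁ : B₁.IsHermitian) (hB₂ : B₂.IsHermitian) (p : ℝ → Prop) [DecidablePred p] :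
    #{j | p (hB.eigenvalues j)} = #{j | p (hB₁.eigenvalues j)} + #{j | p (hB₂.eigenvalues j)} := by
  have h := hB.roots_charpoly_eq_eigenvalues
  rw [charpoly_fromBlocks_zero₁₂,
    Polynomial.roots_mul ((charpoly_monic _).mul (charpoly_monic _)).ne_zero,
    hB₁.roots_charpoly_eq_eigenvalues, hB₂.roots_charpoly_eq_eigenvalues] at h
  simp only [RCLike.ofReal_real_eq_id, Function.id_comp] at h
  simp only [card_filter_eq_countP_map, ← h, Multiset.countP_add]

end IsHermitian

end Matrix

section Counting

variable {k : ℕ} {ι κ : Type*} [Fintype ι] [Fintype κ] {μ ν : Fin k → ℝ} {α : ι → ℝ}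
  {β : κ → ℝ} {i : Fin k} {t gap : ℝ}

theorem apply_sub_apply_le_of_card_filter_lt_le (hμ : Antitone μ) (hν : Antitone ν) (ht : 0 ≤ t)
    (hgap : 0 < gap) (hβ : ∀ j, gap ≤ |μ i - β j|)
    (hμc : ∀ c, #{j | c < μ j} = #{j | c < α j} + #{j | c < β j})
    (hνc : ∀ c, #{j | c < ν j} ≤ #{j | c - t < α j} + #{j | c - gap < β j}) :
    ν i - μ i ≤ t := by
  by_contra! hlt
  rw [lt_sub_iff_add_lt'] at hlt
  have hβ' : #{j | μ i + t - gap < β j} ≤ #{j | μ i < β j} := by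
    refine card_le_card fun j => ?_
    simp only [mem_filter, mem_univ, true_and]
    intro hj
    rcases abs_cases (μ i - β j) with ⟨h, -⟩ | ⟨h, -⟩ <;> linarith [hβ j]
  have hνi := (hν.lt_card_filter_lt_iff i (μ i + t)).2 hlt
  have hμi := (hμ.lt_card_filter_lt_iff i (μ i)).not.2 (lt_irrefl _)
  have hνc' := hνc (μ i + t)
  simp only [add_sub_cancel_right] at hνc'
  have := hμc (μ i)
  omega

theorem apply_sub_apply_le_of_card_filter_gt_le (hμ : Antitone μ) (hν : Antitone ν) (ht : 0 ≤ t)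
    (hgap : 0 < gap) (hβ : ∀ j, gap ≤ |μ i - β j|)
    (hμc : ∀ c, #{j | μ j < c} = #{j | α j < c} + #{j | β j < c})
    (hνc : ∀ c, #{j | ν j < c} ≤ #{j | α j < c + t} + #{j | β j < c + gap}) :
    μ i - ν i ≤ t := by
  by_contra! hlt
  rw [lt_sub_comm] at hlt
  have hβ' : #{j | β j < μ i - t + gap} ≤ #{j | β j < μ i} := by
    refine card_le_card fun j => ?_
    simp only [mem_filter, mem_univ, true_and]
    intro hj
    rcases abs_cases (μ i - β j) with ⟨h, -⟩ | ⟨h, -⟩ <;> linarith [hβ j]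
  have hνi := (hν.le_card_filter_lt_add_iff i (μ i - t)).2 hlt
  have hμi := (hμ.le_card_filter_lt_add_iff i (μ i)).not.2 (lt_irrefl _)
  have hνc' := hνc (μ i - t)
  simp only [sub_add_cancel] at hνc'
  have := hμc (μ i)
  omega

end Counting

theorem quadratic_eigenvalue_perturbation_general
    {n m : ℕ}
    (A1 : Matrix (Fin n) (Fin n) ℝ) (A2 : Matrix (Fin m) (Fin m) ℝ)
    (E1 : Matrix (Fin m) (Fin n) ℝ)
    (hA1 : A1.IsHermitian) (hA2 : A2.IsHermitian)
    (A E : Matrix (Fin n ⊕ Fin m) (Fin n ⊕ Fin m) ℝ)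
    (hA : A = Matrix.fromBlocks A1 0 0 A2)
    (hE : E = Matrix.fromBlocks 0 E1.transpose E1 0)
    (hAH : A.IsHermitian) (hAEH : (A + E).IsHermitian)
    -- `μ` and `ν` are the decreasingly ordered eigenvalues of `A` and `A + E`
    (μ ν : Fin (n + m) → ℝ)
    (hμanti : Antitone μ) (hνanti : Antitone ν)
    (e : Fin (n + m) ≃ (Fin n ⊕ Fin m))
    (hμ : Multiset.ofList (List.ofFn μ) =
      Multiset.ofList (List.ofFn fun i => hAH.eigenvalues (e i)))
    (hν : Multiset.ofList (List.ofFn ν) =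
      Multiset.ofList (List.ofFn fun i => hAEH.eigenvalues (e i)))
    (i : Fin (n + m))
    -- `gap` is (a lower bound for) the distance of `μ i` to the spectrum of `A2`
    (gap : ℝ) (hgap : 0 < gap)
    (hdist : ∀ j : Fin m, gap ≤ |μ i - hA2.eigenvalues j|) :
    |μ i - ν i| ≤ ‖E‖ ^ 2 / gap := by
  subst hA hE
  have hquad (u : Fin n → ℝ) (v : Fin m → ℝ) :
      Sum.elim u v ⬝ᵥ ((fromBlocks A1 0 0 A2 + fromBlocks 0 E1ᵀ E1 0) *ᵥ Sum.elim u v) =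
        u ⬝ᵥ (A1 *ᵥ u) + v ⬝ᵥ (A2 *ᵥ v) + 2 * (v ⬝ᵥ (E1 *ᵥ u)) := by
    rw [fromBlocks_add, add_zero, add_zero, zero_add, zero_add,
      sumElim_dotProduct_fromBlocks_transpose_mulVec_sumElim]
  have hcoupling (u : Fin n → ℝ) (v : Fin m → ℝ) :=
    abs_le.1 (abs_two_mul_dotProduct_mulVec_le_fromBlocks 0 E1ᵀ E1 0 u v hgap)
  have hμc (p : ℝ → Prop) [DecidablePred p] :
      #{j | p (μ j)} = #{j | p (hA1.eigenvalues j)} + #{j | p (hA2.eigenvalues j)} :=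
    (card_filter_eq_of_coe_ofFn_eq e hμ p).trans (hAH.card_filter_eigenvalues_fromBlocks hA1 hA2 p)
  have hνc (p : ℝ → Prop) [DecidablePred p] :
      #{j | p (ν j)} = #{j | p (hAEH.eigenvalues j)} := card_filter_eq_of_coe_ofFn_eq e hν p
  have ht : 0 ≤ ‖fromBlocks 0 E1ᵀ E1 0‖ ^ 2 / gap := by positivity
  refine abs_sub_le_iff.2 ⟨apply_sub_apply_le_of_card_filter_gt_le hμanti hνanti ht hgap hdist
    (fun c => hμc (· < c)) fun c => (hνc (· < c)).trans_le ?_,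
    apply_sub_apply_le_of_card_filter_lt_le hμanti hνanti ht hgap hdist
    (fun c => hμc (c < ·)) fun c => (hνc (c < ·)).trans_le ?_⟩
  · refine hAEH.card_eigenvalues_lt_le_add hA1 hA2 (fun u v => ?_) c
    linarith [hquad u v, (hcoupling u v).1]
  · refine hAEH.card_lt_eigenvalues_le_add hA1 hA2 (fun u v => ?_) c
    linarith [hquad u v, (hcoupling u v).2]

/-- Quadratic residual eigenvalue perturbation bound for a symmetric block-diagonal
matrix `A = [[A1,0],[0,A2]]` perturbed by an off-diagonal symmetric `E = [[0,E1ᵀ],[E1,0]]`.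
If the `i`-th (decreasingly ordered) eigenvalue of `A` is an eigenvalue of `A1` whose
distance to the spectrum of `A2` is at least `gap > 0`, then
`|λ_i(A) - λ_i(A+E)| ≤ ‖E‖² / gap`. -/
theorem quadratic_eigenvalue_perturbation
    {n m : ℕ}
    (A1 : Matrix (Fin n) (Fin n) ℝ) (A2 : Matrix (Fin m) (Fin m) ℝ)
    (E1 : Matrix (Fin m) (Fin n) ℝ)
    (hA1 : A1.IsHermitian) (hA2 : A2.IsHermitian)
    (A E : Matrix (Fin n ⊕ Fin m) (Fin n ⊕ Fin m) ℝ)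
    (hA : A = Matrix.fromBlocks A1 0 0 A2)
    (hE : E = Matrix.fromBlocks 0 E1.transpose E1 0)
    (hAH : A.IsHermitian) (hAEH : (A + E).IsHermitian)
    -- `μ` and `ν` are the decreasingly ordered eigenvalues of `A` and `A + E`
    (μ ν : Fin (n + m) → ℝ)
    (hμanti : Antitone μ) (hνanti : Antitone ν)
    (e : Fin (n + m) ≃ (Fin n ⊕ Fin m))
    (hμ : Multiset.ofList (List.ofFn μ) =
      Multiset.ofList (List.ofFn fun i => hAH.eigenvalues (e i)))
    (hν : Multiset.ofList (List.ofFn ν) =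
      Multiset.ofList (List.ofFn fun i => hAEH.eigenvalues (e i)))
    (i : Fin (n + m))
    -- `μ i` is an eigenvalue of `A1`
    (hiA1 : ∃ v : Fin n → ℝ, v ≠ 0 ∧ A1.mulVec v = μ i • v)
    -- `gap` is (a lower bound for) the distance of `μ i` to the spectrum of `A2`
    (gap : ℝ) (hgap : 0 < gap)
    (hdist : ∀ j : Fin m, gap ≤ |μ i - hA2.eigenvalues j|) :
    |μ i - ν i| ≤ ‖E‖ ^ 2 / gap :=
  quadratic_eigenvalue_perturbation_general A1 A2 E1 hA1 hA2 A E hA hE hAH hAEH μ ν hμanti hνanti e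
    hμ hν i gap hgap hdist
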